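/- Let 𝒰 be a unitary system with a complete wandering vector ψ. Then the set of complete wandering vectors for 𝒰 equals {Uψ : U a unitary operator in C_ψ(𝒰)}, and the correspondence U ↦ Uψ is one-to-one. -/

import Mathlib

/-!
Two complete wandering vectors `ψ, η` give two Hilbert bases `(Wψ)_{W ∈ 𝒰}` and `(Wη)_{W ∈ 𝒰}`
indexed by the same set, so there is a unitary `U` with `U(Wψ) = Wη`; since `I ∈ 𝒰` this says
`Uψ = η` and `U(Wψ) = W(Uψ)`, i.e. `U ∈ C_ψ(𝒰)`. Conversely a unitary in `C_ψ(𝒰)` maps the basis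
`(Wψ)` onto `(W(Uψ))`. Injectivity holds because an operator in `C_ψ(𝒰)` is determined on the
dense span of the `Wψ` by its value at `ψ`.
-/

variable {H : Type*} [NormedAddCommGroup H] [InnerProductSpace ℂ H] [CompleteSpace H]

/-- `ψ` is a complete wandering vector for the unitary system `𝒰`:
`{Uψ : U ∈ 𝒰}` is an orthonormal basis of `H`. -/
def IsCompleteWandering (𝒰 : Set (H →L[ℂ] H)) (ψ : H) : Prop :=
  Orthonormal ℂ (fun U : 𝒰 => (U : H →L[ℂ] H) ψ) ∧
    (Submodule.span ℂ ((fun U : H →L[ℂ] H => U ψ) '' 𝒰)).topologicalClosure = ⊤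

/-- The local commutant of `𝒰` at `ψ`. -/
def localCommutant (𝒰 : Set (H →L[ℂ] H)) (ψ : H) : Set (H →L[ℂ] H) :=
  {A : H →L[ℂ] H | ∀ U ∈ 𝒰, (A * U - U * A) ψ = 0}

theorem HilbertBasis.repr_trans_repr_symm_apply {ι 𝕜 E E' : Type*} [RCLike 𝕜]
    [NormedAddCommGroup E] [InnerProductSpace 𝕜 E] [NormedAddCommGroup E'] [InnerProductSpace 𝕜 E']
    (b : HilbertBasis ι 𝕜 E) (c : HilbertBasis ι 𝕜 E') (i : ι) :
    b.repr.trans c.repr.symm (b i) = c i := by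
  classical
  simp only [LinearIsometryEquiv.trans_apply, b.repr_self, c.repr_symm_single]

namespace localCommutant

omit [CompleteSpace H]

variable {𝒰 : Set (H →L[ℂ] H)} {ψ : H} {A : H →L[ℂ] H}

theorem mem_iff : A ∈ localCommutant 𝒰 ψ ↔ ∀ W ∈ 𝒰, A (W ψ) = W (A ψ) := by
  simp [localCommutant, sub_eq_zero]

theorem apply_apply_comm (hA : A ∈ localCommutant 𝒰 ψ) {W : H →L[ℂ] H} (hW : W ∈ 𝒰) :
    A (W ψ) = W (A ψ) :=
  mem_iff.mp hA W hW

theorem ext (hψ : Dense (Submodule.span ℂ ((fun W : H →L[ℂ] H => W ψ) '' 𝒰) : Set H))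
    {B : H →L[ℂ] H} (hA : A ∈ localCommutant 𝒰 ψ) (hB : B ∈ localCommutant 𝒰 ψ)
    (hAB : A ψ = B ψ) : A = B := by
  refine ContinuousLinearMap.ext_on hψ ?_
  rintro _ ⟨W, hW, rfl⟩
  simp only [apply_apply_comm hA hW, apply_apply_comm hB hW, hAB]

end localCommutant

namespace IsCompleteWandering

variable {𝒰 : Set (H →L[ℂ] H)} {ψ : H}

omit [CompleteSpace H] in
theorem dense_span (hψ : IsCompleteWandering 𝒰 ψ) :
    Dense (Submodule.span ℂ ((fun W : H →L[ℂ] H => W ψ) '' 𝒰) : Set H) :=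
  Submodule.dense_iff_topologicalClosure_eq_top.mpr hψ.2

noncomputable def hilbertBasis (hψ : IsCompleteWandering 𝒰 ψ) : HilbertBasis 𝒰 ℂ H :=
  HilbertBasis.mk hψ.1 (by rw [← Set.image_eq_range (fun W : H →L[ℂ] H => W ψ), hψ.2])

theorem hilbertBasis_apply (hψ : IsCompleteWandering 𝒰 ψ) (W : 𝒰) :
    hψ.hilbertBasis W = (W : H →L[ℂ] H) ψ :=
  congrFun (HilbertBasis.coe_mk _ _) W

theorem map_of_mem_localCommutant (hψ : IsCompleteWandering 𝒰 ψ) {U : H →L[ℂ] H}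
    (hU : U ∈ unitary (H →L[ℂ] H)) (hUc : U ∈ localCommutant 𝒰 ψ) :
    IsCompleteWandering 𝒰 (U ψ) := by
  let e : H ≃ₗᵢ[ℂ] H := Unitary.linearIsometryEquiv ⟨U, hU⟩
  have himage : (fun W : H →L[ℂ] H => W (U ψ)) '' 𝒰 = e '' ((fun W : H →L[ℂ] H => W ψ) '' 𝒰) := by
    rw [Set.image_image]
    exact Set.image_congr fun W hW => (localCommutant.apply_apply_comm hUc hW).symm
  constructor
  · have hfamily : (fun W : 𝒰 => (W : H →L[ℂ] H) (U ψ)) = e ∘ fun W : 𝒰 => (W : H →L[ℂ] H) ψ :=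
      funext fun W => (localCommutant.apply_apply_comm hUc W.2).symm
    rw [hfamily]
    exact hψ.1.comp_linearIsometry e.toLinearIsometry
  · rw [← Submodule.dense_iff_topologicalClosure_eq_top, himage]
    have hspan : Submodule.span ℂ (e '' ((fun W : H →L[ℂ] H => W ψ) '' 𝒰)) =
        (Submodule.span ℂ ((fun W : H →L[ℂ] H => W ψ) '' 𝒰)).map (e.toLinearEquiv : H →ₗ[ℂ] H) :=
      Submodule.span_image _
    rw [hspan, Submodule.map_coe]
    exact e.surjective.denseRange.dense_image e.continuous hψ.dense_span

theorem exists_unitary_mem_localCommutant (h1 : (1 : H →L[ℂ] H) ∈ 𝒰)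
    (hψ : IsCompleteWandering 𝒰 ψ) {η : H} (hη : IsCompleteWandering 𝒰 η) :
    ∃ U : H →L[ℂ] H, U ∈ unitary (H →L[ℂ] H) ∧ U ∈ localCommutant 𝒰 ψ ∧ U ψ = η := by
  let e : H ≃ₗᵢ[ℂ] H := hψ.hilbertBasis.repr.trans hη.hilbertBasis.repr.symm
  have he : ∀ W ∈ 𝒰, e (W ψ) = W η := fun W hW => by
    simpa only [hilbertBasis_apply] using
      HilbertBasis.repr_trans_repr_symm_apply hψ.hilbertBasis hη.hilbertBasis ⟨W, hW⟩
  have heψ : e ψ = η := by simpa using he 1 h1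
  refine ⟨e, (Unitary.linearIsometryEquiv.symm e).property, ?_, heψ⟩
  rw [localCommutant.mem_iff]
  intro W hW
  simpa [heψ] using he W hW

end IsCompleteWandering

theorem stmt_4 (𝒰 : Set (H →L[ℂ] H)) (h1 : (1 : H →L[ℂ] H) ∈ 𝒰)
    (ψ : H) (hψ : IsCompleteWandering 𝒰 ψ) :
    ({η : H | IsCompleteWandering 𝒰 η} =
      {η : H | ∃ U : H →L[ℂ] H, U ∈ unitary (H →L[ℂ] H) ∧ U ∈ localCommutant 𝒰 ψ ∧ U ψ = η}) ∧
    (∀ U V : H →L[ℂ] H, U ∈ unitary (H →L[ℂ] H) → V ∈ unitary (H →L[ℂ] H) →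
      U ∈ localCommutant 𝒰 ψ → V ∈ localCommutant 𝒰 ψ → U ψ = V ψ → U = V) := by
  refine ⟨Set.ext fun η => ⟨hψ.exists_unitary_mem_localCommutant h1, ?_⟩, ?_⟩
  · rintro ⟨U, hU, hUc, rfl⟩
    exact hψ.map_of_mem_localCommutant hU hUc
  · intro U V _ _ hUc hVc hUV
    exact localCommutant.ext hψ.dense_span hUc hVc hUV
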